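/- Let CC be a C-system and CC' a C-subsystem of CC. Then the pair (B, B̃) with B = Ob(CC') and B̃ = Õb(CC') satisfies: (1) pt ∈ B; (2) if X ∈ B then ft(X) ∈ B; (3) if s ∈ B̃ then ∂(s) ∈ B; (4) if Y ∈ B and r ∈ B̃ with T̃(Y,r) defined, then T̃(Y,r) ∈ B̃; (5) if s ∈ B̃ and r ∈ B̃ with S̃(s,r) defined, then S̃(s,r) ∈ B̃; (6) if X ∈ B with l(X) > 0 then δ(X) ∈ B̃. -/

import Mathlib

universe u v

/-- A pre-category: sets of objects and morphisms with source, target, identity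
and an (everywhere-defined but only meaningful on composable pairs) composition,
written in diagrammatic order: `comp f g` is `f ∘ g` for `f : X → Y`, `g : Y → Z`. -/
structure PreCat (Ob : Type u) (Mor : Type v) where
  dom : Mor → Ob
  cod : Mor → Ob
  id : Ob → Mor
  comp : Mor → Mor → Mor
  id_dom : ∀ X, dom (id X) = X
  id_cod : ∀ X, cod (id X) = X
  dom_comp : ∀ f g, cod f = dom g → dom (comp f g) = dom f
  cod_comp : ∀ f g, cod f = dom g → cod (comp f g) = cod g
  id_comp : ∀ f, comp (id (dom f)) f = f
  comp_id : ∀ f, comp f (id (cod f)) = f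
  comp_assoc : ∀ f g h, cod f = dom g → cod g = dom h →
    comp (comp f g) h = comp f (comp g h)

/-- A C0-system (Definition 2014.07.06.def3). -/
structure C0 (Ob : Type u) (Mor : Type v) extends PreCat Ob Mor where
  l : Ob → ℕ
  pt : Ob
  ft : Ob → Ob
  p : Ob → Mor
  p_dom : ∀ X, dom (p X) = X
  p_cod : ∀ X, cod (p X) = ft X
  /-- `star X f` is `f*X`, meaningful for `0 < l X` and `cod f = ft X`. -/
  star : Ob → Mor → Ob
  /-- `q X f` is `q(f,X) : f*X → X`, meaningful for `0 < l X` and `cod f = ft X`. -/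
  q : Ob → Mor → Mor
  l_pt : l pt = 0
  eq_pt : ∀ X, l X = 0 → X = pt
  l_ft : ∀ X, 0 < l X → l (ft X) = l X - 1
  ft_pt : ft pt = pt
  pt_final : ∀ Y, ∃! f, dom f = Y ∧ cod f = pt
  l_star : ∀ X f, 0 < l X → cod f = ft X → 0 < l (star X f)
  ft_star : ∀ X f, 0 < l X → cod f = ft X → ft (star X f) = dom f
  q_dom : ∀ X f, 0 < l X → cod f = ft X → dom (q X f) = star X f
  q_cod : ∀ X f, 0 < l X → cod f = ft X → cod (q X f) = X
  square_comm : ∀ X f, 0 < l X → cod f = ft X →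
    comp (p (star X f)) f = comp (q X f) (p X)
  star_id : ∀ X, 0 < l X → star X (id (ft X)) = X
  q_id : ∀ X, 0 < l X → q X (id (ft X)) = id X
  star_comp : ∀ X f g, 0 < l X → cod f = ft X → cod g = dom f →
    star X (comp g f) = star (star X f) g
  q_comp : ∀ X f g, 0 < l X → cod f = ft X → cod g = dom f →
    q X (comp g f) = comp (q (star X f) g) (q X f)

/-- `ft(f) = f ∘ p_X` for `f : Y → X`. -/
def C0.ftMor {Ob : Type u} {Mor : Type v} (C : C0 Ob Mor) (f : Mor) : Mor :=
  C.comp f (C.p (C.cod f))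

/-- The axioms of the operation `f ↦ s_f` of a C-system (Definition 2014.07.06.def1),
for `f : Y → X` with `0 < l X`. -/
def C0.IsSOp {Ob : Type u} {Mor : Type v} (C : C0 Ob Mor) (s : Mor → Mor) : Prop :=
  (∀ f, 0 < C.l (C.cod f) → C.dom (s f) = C.dom f) ∧
  (∀ f, 0 < C.l (C.cod f) → C.cod (s f) = C.star (C.cod f) (C.ftMor f)) ∧
  (∀ f, 0 < C.l (C.cod f) →
    C.comp (s f) (C.p (C.star (C.cod f) (C.ftMor f))) = C.id (C.dom f)) ∧
  (∀ f, 0 < C.l (C.cod f) → C.comp (s f) (C.q (C.cod f) (C.ftMor f)) = f) ∧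
  (∀ f U g, 0 < C.l U → C.cod g = C.ft U → 0 < C.l (C.cod f) → C.cod f = C.star U g →
    s f = s (C.comp f (C.q U g)))

/-- A C-system: a C0-system together with an operation `f ↦ s_f` satisfying the axioms. -/
structure CSys (Ob : Type u) (Mor : Type v) extends C0 Ob Mor where
  sOp : Mor → Mor
  sOp_spec : C0.IsSOp toC0 sOp

def CSys.ftMor {Ob : Type u} {Mor : Type v} (C : CSys Ob Mor) (f : Mor) : Mor :=
  C.comp f (C.p (C.cod f))

/-- `Õb(CC)`: the set of sections `s : ft X → X` of the canonical projections `p_X`,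
for `l X > 0`. -/
def CSys.tOb {Ob : Type u} {Mor : Type v} (C : CSys Ob Mor) : Set Mor :=
  {s | 0 < C.l (C.cod s) ∧ C.dom s = C.ft (C.cod s) ∧
    C.comp s (C.p (C.cod s)) = C.id (C.ft (C.cod s))}

/-- Iterated canonical projection `p_{X,i} : X → ft^i X` (meaningful for `i ≤ l X`). -/
def CSys.pIter {Ob : Type u} {Mor : Type v} (C : CSys Ob Mor) (X : Ob) : ℕ → Mor
  | 0 => C.id X
  | i + 1 => C.comp (CSys.pIter C X i) (C.p (C.ft^[i] X))

/-- Iterated pull-back morphism `q(f,X,i) : f*(X,i) → X` for `f : Y → ft^i X`. -/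
def CSys.qIter {Ob : Type u} {Mor : Type v} (C : CSys Ob Mor) (f : Mor) : Ob → ℕ → Mor
  | _, 0 => f
  | X, i + 1 => C.q X (CSys.qIter C f (C.ft X) i)

/-- Iterated pull-back object `f*(X,i)` for `f : Y → ft^i X`. -/
def CSys.starIter {Ob : Type u} {Mor : Type v} (C : CSys Ob Mor) (f : Mor) : Ob → ℕ → Ob
  | _, 0 => C.dom f
  | X, i + 1 => C.star X (CSys.qIter C f (C.ft X) i)

/-- Pull-back `f*(r,i) : f*(ft X, i-1) → f*(X,i)` of a section `r : ft X → X` along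
`q(f, ft X, i-1)` (for `i ≥ 1`); it equals `s` applied to `q(f,ft X,i-1) ∘ r`. -/
def CSys.sectStar {Ob : Type u} {Mor : Type v} (C : CSys Ob Mor)
    (f : Mor) (X : Ob) (r : Mor) (i : ℕ) : Mor :=
  C.sOp (C.comp (C.qIter f (C.ft X) (i - 1)) r)

/-- The diagonal `δ(X) = s_{Id_X} : X → p_X^*(X)`. -/
def CSys.delta {Ob : Type u} {Mor : Type v} (C : CSys Ob Mor) (X : Ob) : Mor :=
  C.sOp (C.id X)

/-- A C-subsystem: a sub-pre-category closed under the operations defining the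
C-system structure. -/
structure Subsystem {Ob : Type u} {Mor : Type v} (C : CSys Ob Mor) where
  obs : Set Ob
  mors : Set Mor
  dom_mem : ∀ f ∈ mors, C.dom f ∈ obs
  cod_mem : ∀ f ∈ mors, C.cod f ∈ obs
  id_mem : ∀ X ∈ obs, C.id X ∈ mors
  comp_mem : ∀ f ∈ mors, ∀ g ∈ mors, C.cod f = C.dom g → C.comp f g ∈ mors
  pt_mem : C.pt ∈ obs
  ft_mem : ∀ X ∈ obs, C.ft X ∈ obs
  p_mem : ∀ X ∈ obs, C.p X ∈ mors
  star_mem : ∀ X ∈ obs, ∀ f ∈ mors, 0 < C.l X → C.cod f = C.ft X → C.star X f ∈ obs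
  q_mem : ∀ X ∈ obs, ∀ f ∈ mors, 0 < C.l X → C.cod f = C.ft X → C.q X f ∈ mors
  s_mem : ∀ f ∈ mors, 0 < C.l (C.cod f) → C.sOp f ∈ mors

/-- The closure conditions (1)-(6) of Proposition 2009.10.15.prop2 on a pair of subsets
`B ⊆ Ob(CC)`, `B̃ ⊆ Õb(CC)`. -/
def CSys.Closed {Ob : Type u} {Mor : Type v} (C : CSys Ob Mor)
    (B : Set Ob) (Bt : Set Mor) : Prop :=
  C.pt ∈ B ∧
  (∀ X ∈ B, C.ft X ∈ B) ∧
  (∀ s ∈ Bt, C.cod s ∈ B) ∧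
  (∀ Y ∈ B, ∀ r ∈ Bt, 0 < C.l Y → ∀ i : ℕ, 1 ≤ i → i ≤ C.l (C.cod r) →
    C.ft Y = C.ft^[i] (C.cod r) → C.sectStar (C.p Y) (C.cod r) r i ∈ Bt) ∧
  (∀ s ∈ Bt, ∀ r ∈ Bt, ∀ i : ℕ, 1 ≤ i →
    C.cod s = C.ft^[i] (C.cod r) → C.sectStar s (C.cod r) r i ∈ Bt) ∧
  (∀ X ∈ B, 0 < C.l X → C.delta X ∈ Bt)

/-- The inductively defined set of morphisms `Mor(CC')` determined by a pair `(B,B̃)`: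
`f : Y → pt` belongs iff `Y ∈ B`; `f : Y → X` with `l X > 0` belongs iff `X ∈ B`,
`ft(f)` belongs and `s_f ∈ B̃`. -/
inductive MorIn {Ob : Type u} {Mor : Type v} (C : CSys Ob Mor)
    (B : Set Ob) (Bt : Set Mor) : Mor → Prop
  | base (f : Mor) : C.cod f = C.pt → C.dom f ∈ B → MorIn C B Bt f
  | step (f : Mor) : 0 < C.l (C.cod f) → C.cod f ∈ B →
      MorIn C B Bt (C.ftMor f) → C.sOp f ∈ Bt → MorIn C B Bt f

/-- A regular congruence relation on a C-system (Definition 2014.07.04.def1). -/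
structure RegCong {Ob : Type u} {Mor : Type v} (C : CSys Ob Mor) where
  rOb : Ob → Ob → Prop
  rMor : Mor → Mor → Prop
  eqv_ob : Equivalence rOb
  eqv_mor : Equivalence rMor
  dom_compat : ∀ f g, rMor f g → rOb (C.dom f) (C.dom g)
  cod_compat : ∀ f g, rMor f g → rOb (C.cod f) (C.cod g)
  id_compat : ∀ X Y, rOb X Y → rMor (C.id X) (C.id Y)
  ft_compat : ∀ X Y, rOb X Y → rOb (C.ft X) (C.ft Y)
  p_compat : ∀ X Y, rOb X Y → rMor (C.p X) (C.p Y)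
  comp_compat : ∀ f f' g g', C.cod f = C.dom g → C.cod f' = C.dom g' →
    rMor f f' → rMor g g' → rMor (C.comp f g) (C.comp f' g')
  star_compat : ∀ X X' f f', 0 < C.l X → 0 < C.l X' →
    C.cod f = C.ft X → C.cod f' = C.ft X' →
    rOb X X' → rMor f f' → rOb (C.star X f) (C.star X' f')
  q_compat : ∀ X X' f f', 0 < C.l X → 0 < C.l X' →
    C.cod f = C.ft X → C.cod f' = C.ft X' →
    rOb X X' → rMor f f' → rMor (C.q X f) (C.q X' f')
  s_compat : ∀ f f', 0 < C.l (C.cod f) → 0 < C.l (C.cod f') →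
    rMor f f' → rMor (C.sOp f) (C.sOp f')
  l_compat : ∀ X Y, rOb X Y → C.l X = C.l Y
  ob_lift : ∀ X F, 0 < C.l X → rOb (C.ft X) F → ∃ XF, rOb X XF ∧ C.ft XF = F
  mor_lift : ∀ f X' Y', rOb X' (C.dom f) → rOb Y' (C.cod f) →
    ∃ f', C.dom f' = X' ∧ C.cod f' = Y' ∧ rMor f' f

/-- A homomorphism of C-systems, given by a pair of maps on objects and morphisms. -/
structure IsHom {Ob₁ : Type u} {Mor₁ : Type v} {Ob₂ : Type u} {Mor₂ : Type v}
    (C : CSys Ob₁ Mor₁) (D : CSys Ob₂ Mor₂) (F : Ob₁ → Ob₂) (G : Mor₁ → Mor₂) : Prop where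
  dom_map : ∀ f, D.dom (G f) = F (C.dom f)
  cod_map : ∀ f, D.cod (G f) = F (C.cod f)
  id_map : ∀ X, G (C.id X) = D.id (F X)
  comp_map : ∀ f g, C.cod f = C.dom g → G (C.comp f g) = D.comp (G f) (G g)
  l_map : ∀ X, D.l (F X) = C.l X
  pt_map : F C.pt = D.pt
  ft_map : ∀ X, F (C.ft X) = D.ft (F X)
  p_map : ∀ X, G (C.p X) = D.p (F X)
  star_map : ∀ X f, 0 < C.l X → C.cod f = C.ft X → F (C.star X f) = D.star (F X) (G f)
  q_map : ∀ X f, 0 < C.l X → C.cod f = C.ft X → G (C.q X f) = D.q (F X) (G f)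
  s_map : ∀ f, 0 < C.l (C.cod f) → G (C.sOp f) = D.sOp (G f)

/-- A pair of equivalence relations `(∼, ≃)` on `(Ob(CC), Õb(CC))` satisfying the
conditions (1)-(4) of Proposition 2014.07.08.prop1.  The relation `≃` is encoded as a
relation on morphisms supported on `Õb(CC)`. -/
structure TPair {Ob : Type u} {Mor : Type v} (C : CSys Ob Mor) where
  rOb : Ob → Ob → Prop
  rT : Mor → Mor → Prop
  eqv_ob : Equivalence rOb
  rT_supp : ∀ s r, rT s r → s ∈ C.tOb ∧ r ∈ C.tOb
  rT_refl : ∀ s ∈ C.tOb, rT s s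
  rT_symm : ∀ s r, rT s r → rT r s
  rT_trans : ∀ s r t, rT s r → rT r t → rT s t
  ft_compat : ∀ X Y, rOb X Y → rOb (C.ft X) (C.ft Y)
  bd_compat : ∀ s r, rT s r → rOb (C.cod s) (C.cod r)
  T_compat : ∀ Y Y' X X' (i : ℕ), 1 ≤ i → i ≤ C.l X → i ≤ C.l X' →
    0 < C.l Y → 0 < C.l Y' → C.ft Y = C.ft^[i] X → C.ft Y' = C.ft^[i] X' →
    rOb Y Y' → rOb X X' →
    rOb (C.starIter (C.p Y) X i) (C.starIter (C.p Y') X' i)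
  Tt_compat : ∀ Y Y' r r' (i : ℕ), 1 ≤ i → i ≤ C.l (C.cod r) → i ≤ C.l (C.cod r') →
    0 < C.l Y → 0 < C.l Y' → C.ft Y = C.ft^[i] (C.cod r) → C.ft Y' = C.ft^[i] (C.cod r') →
    rOb Y Y' → rT r r' →
    rT (C.sectStar (C.p Y) (C.cod r) r i) (C.sectStar (C.p Y') (C.cod r') r' i)
  S_compat : ∀ s s' X X' (i : ℕ), 1 ≤ i → s ∈ C.tOb → s' ∈ C.tOb →
    C.cod s = C.ft^[i] X → C.cod s' = C.ft^[i] X' → rT s s' → rOb X X' →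
    rOb (C.starIter s X i) (C.starIter s' X' i)
  St_compat : ∀ s s' r r' (i : ℕ), 1 ≤ i →
    C.cod s = C.ft^[i] (C.cod r) → C.cod s' = C.ft^[i] (C.cod r') →
    rT s s' → rT r r' →
    rT (C.sectStar s (C.cod r) r i) (C.sectStar s' (C.cod r') r' i)
  delta_compat : ∀ X X', 0 < C.l X → 0 < C.l X' → rOb X X' →
    rT (C.delta X) (C.delta X')
  l_compat : ∀ X Y, rOb X Y → C.l X = C.l Y
  ob_lift : ∀ X F, 0 < C.l X → rOb (C.ft X) F → ∃ XF, rOb X XF ∧ C.ft XF = F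
  sec_lift : ∀ s X', s ∈ C.tOb → rOb X' (C.cod s) →
    ∃ s', s' ∈ C.tOb ∧ C.cod s' = X' ∧ rT s' s

/-- The relation `∼_Mor` on morphisms with codomain of length `m`, defined by induction
on `m` from a pair `(∼, ≃)`:  for `m = 0`, `(X₁ → pt) ∼ (X₂ → pt)` iff `X₁ ∼ X₂`;
for `m+1`, `f₁ ∼ f₂` iff `ft(f₁) ∼ ft(f₂)` and `s_{f₁} ≃ s_{f₂}`. -/
def CSys.relMorN {Ob : Type u} {Mor : Type v} (C : CSys Ob Mor) (P : TPair C) :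
    ℕ → Mor → Mor → Prop
  | 0, f₁, f₂ => C.cod f₁ = C.pt ∧ C.cod f₂ = C.pt ∧ P.rOb (C.dom f₁) (C.dom f₂)
  | m + 1, f₁, f₂ => C.l (C.cod f₁) = m + 1 ∧ C.l (C.cod f₂) = m + 1 ∧
      CSys.relMorN C P m (C.ftMor f₁) (C.ftMor f₂) ∧ P.rT (C.sOp f₁) (C.sOp f₂)

def CSys.relMor {Ob : Type u} {Mor : Type v} (C : CSys Ob Mor) (P : TPair C)
    (f₁ f₂ : Mor) : Prop :=
  CSys.relMorN C P (C.l (C.cod f₁)) f₁ f₂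

section Aux

variable {Ob : Type u} {Mor : Type v} (C : CSys Ob Mor)

lemma aux_l_ftIter (X : Ob) : ∀ k, C.l (C.ft^[k] X) = C.l X - k := by
  intro k
  induction k with
  | zero => simp
  | succ n ih =>
    rw [Function.iterate_succ_apply']
    by_cases h : 0 < C.l (C.ft^[n] X)
    · rw [C.l_ft _ h, ih]; omega
    · have h0 : C.l (C.ft^[n] X) = 0 := by omega
      rw [C.eq_pt _ h0, C.ft_pt, C.l_pt]
      omega

lemma aux_cod_ftMor (f : Mor) : C.cod (C.ftMor f) = C.ft (C.cod f) := by
  unfold CSys.ftMor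
  rw [C.cod_comp _ _ (by rw [C.p_dom]), C.p_cod]

lemma aux_dom_ftMor (f : Mor) : C.dom (C.ftMor f) = C.dom f := by
  unfold CSys.ftMor
  rw [C.dom_comp _ _ (by rw [C.p_dom])]

lemma aux_sOp_tOb (f : Mor) (h : 0 < C.l (C.cod f)) : C.sOp f ∈ C.tOb := by
  obtain ⟨h1, h2, h3, h4, h5⟩ := C.sOp_spec
  have hc : C.cod (C.sOp f) = C.star (C.cod f) (C.ftMor f) := h2 f h
  have hcft : C.cod (C.ftMor f) = C.ft (C.cod f) := aux_cod_ftMor C f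
  have hls : 0 < C.l (C.star (C.cod f) (C.ftMor f)) := C.l_star _ _ h hcft
  have hft : C.ft (C.star (C.cod f) (C.ftMor f)) = C.dom f := by
    rw [C.ft_star _ _ h hcft, aux_dom_ftMor]
  refine ⟨by rw [hc]; exact hls, ?_, ?_⟩
  · rw [hc, hft, h1 f h]
  · rw [hc, hft]; exact h3 f h

lemma aux_qIter_spec (S : Subsystem C) :
    ∀ (n : ℕ) (X : Ob) (f : Mor), C.cod f = C.ft^[n] X → n ≤ C.l X →
      X ∈ S.obs → f ∈ S.mors →
      C.qIter f X n ∈ S.mors ∧ C.cod (C.qIter f X n) = X := by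
  intro n
  induction n with
  | zero => intro X f hc _ _ hf; exact ⟨hf, by show C.cod f = X; simpa using hc⟩
  | succ n ih =>
    intro X f hc hl hX hf
    have hpos : 0 < C.l X := by omega
    have hlft : C.l (C.ft X) = C.l X - 1 := C.l_ft X hpos
    rw [Function.iterate_succ_apply] at hc
    obtain ⟨hm, hcod⟩ := ih (C.ft X) f hc (by omega) (S.ft_mem X hX) hf
    show C.q X (C.qIter f (C.ft X) n) ∈ S.mors ∧
      C.cod (C.q X (C.qIter f (C.ft X) n)) = X
    exact ⟨S.q_mem X hX _ hm hpos hcod, C.q_cod X _ hpos hcod⟩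

lemma aux_sectStar_mem (S : Subsystem C) (g r : Mor)
    (hg : g ∈ S.mors) (hr : r ∈ S.mors) (hrt : r ∈ C.tOb) (i : ℕ) (h1 : 1 ≤ i)
    (hli : i ≤ C.l (C.cod r)) (hcg : C.cod g = C.ft^[i] (C.cod r)) :
    C.sectStar g (C.cod r) r i ∈ S.mors ∩ C.tOb := by
  obtain ⟨hrl, hrd, hrs⟩ := hrt
  have hpos : 0 < C.l (C.cod r) := hrl
  have hlft : C.l (C.ft (C.cod r)) = C.l (C.cod r) - 1 := C.l_ft _ hpos
  have hcg' : C.cod g = C.ft^[i - 1] (C.ft (C.cod r)) := by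
    rw [show i = i - 1 + 1 by omega] at hcg
    rwa [Function.iterate_succ_apply] at hcg
  have hftobs : C.ft (C.cod r) ∈ S.obs := S.ft_mem _ (S.cod_mem r hr)
  obtain ⟨hqm, hqc⟩ := aux_qIter_spec C S (i - 1) (C.ft (C.cod r)) g hcg'
    (by omega) hftobs hg
  have hcomp : C.comp (C.qIter g (C.ft (C.cod r)) (i - 1)) r ∈ S.mors :=
    S.comp_mem _ hqm r hr (by rw [hqc, hrd])
  have hccomp : C.cod (C.comp (C.qIter g (C.ft (C.cod r)) (i - 1)) r) = C.cod r :=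
    C.cod_comp _ _ (by rw [hqc, hrd])
  have hlc : 0 < C.l (C.cod (C.comp (C.qIter g (C.ft (C.cod r)) (i - 1)) r)) := by
    rw [hccomp]; exact hpos
  exact ⟨S.s_mem _ hcomp hlc, aux_sOp_tOb C _ hlc⟩

end Aux

/-- "only if" part of Proposition 2009.10.15.prop2: the pair
`(Ob(CC'), Õb(CC'))` of a C-subsystem satisfies the closure conditions (1)-(6). -/
theorem stmt6 {Ob : Type u} {Mor : Type v} (C : CSys Ob Mor) (S : Subsystem C) :
    C.Closed S.obs (S.mors ∩ C.tOb) := by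
  refine ⟨S.pt_mem, fun X hX => S.ft_mem X hX, fun s hs => S.cod_mem s hs.1,
    ?_, ?_, ?_⟩
  · intro Y hY r hr hlY i h1 hi hft
    exact aux_sectStar_mem C S (C.p Y) r (S.p_mem Y hY) hr.1 hr.2 i h1 hi
      (by rw [C.p_cod]; exact hft)
  · intro s hs r hr i h1 hcs
    have hls : 0 < C.l (C.cod s) := hs.2.1
    have hli : i ≤ C.l (C.cod r) := by
      have := aux_l_ftIter C (C.cod r) i
      rw [← hcs] at this
      omega
    exact aux_sectStar_mem C S s r hs.1 hr.1 hr.2 i h1 hli hcs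
  · intro X hX hlX
    have hc : C.cod (C.id X) = X := C.id_cod X
    have hl : 0 < C.l (C.cod (C.id X)) := by rw [hc]; exact hlX
    exact ⟨S.s_mem _ (S.id_mem X hX) hl, aux_sOp_tOb C _ hl⟩
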